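/- arXiv:math/9901061 — 3 statements merged into one kernel-verified Lean document; each statement's English description precedes it below -/
import Mathlib

section
/- Let A be a ℂ(q)-algebra and let x, X ∈ A satisfy X·x = q^{-2}·x·X + (1 - q^{-2})·X². Define S(X) = z·(X - x) formally, i.e. consider the element z·(X - x) in A[z]. Then for every n ≥ 0, (z(X - x))^n = z^n · ∑_{k=0}^{n} (-1)^k [n choose k]_q q^{-(n-k)(n-1)} x^k X^{n-k}, where [n choose k]_q is the quantum binomial coefficient. -/
open Finset

noncomputable def qq : RatFunc ℂ := RatFunc.X

noncomputable def qint (m : ℕ) : RatFunc ℂ := (qq ^ m - qq⁻¹ ^ m) / (qq - qq⁻¹)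

noncomputable def qfact : ℕ → RatFunc ℂ
  | 0 => 1
  | n + 1 => qint (n + 1) * qfact n

noncomputable def qbinom (n r : ℕ) : RatFunc ℂ :=
  if r ≤ n then qfact n / (qfact (n - r) * qfact r) else 0

/-!
The relation says exactly that `X (X - x) = q⁻² (X - x) X`, hence
`X^m (X - x) = q^{-2m} (X - x) X^m`, and a normal-ordered monomial times `X - x` is
`x^k X^m (X - x) = q^{-2m} (x^k X^{m+1} - x^{k+1} X^m)`.
So `(X - x)^n` is a combination of the `x^k X^{n-k}` whose coefficients obey a Pascal-type
recursion, and the q-Pascal rule `[n+1, k+1] = q^{k+1} [n, k+1] + q^{-(n-k)} [n, k]` shows that the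
claimed coefficients obey it too.
-/

lemma qq_ne_zero : qq ≠ 0 := RatFunc.X_ne_zero

lemma qq_pow_ne_one {m : ℕ} (hm : m ≠ 0) : qq ^ m ≠ 1 := fun h =>
  (RatFunc.transcendental_X.pow (Nat.pos_of_ne_zero hm)) (h ▸ isAlgebraic_one)

lemma qint_ne_zero {m : ℕ} (hm : m ≠ 0) : qint m ≠ 0 := by
  have hsq : ∀ n : ℕ, qq ^ n - qq⁻¹ ^ n = 0 → qq ^ (2 * n) = 1 := fun n hn => by
    rw [sub_eq_zero, inv_pow, ← mul_eq_one_iff_eq_inv₀ (pow_ne_zero _ qq_ne_zero)] at hn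
    rwa [two_mul, pow_add]
  refine div_ne_zero (fun h => qq_pow_ne_one (by omega) (hsq m h)) fun h => ?_
  exact qq_pow_ne_one two_ne_zero (by simpa using hsq 1 (by simpa using h))

lemma qfact_ne_zero (n : ℕ) : qfact n ≠ 0 := by
  induction n with
  | zero => exact one_ne_zero
  | succ n ih => exact mul_ne_zero (qint_ne_zero n.succ_ne_zero) ih

lemma qint_add (a b : ℕ) : qint (a + b) = qq ^ a * qint b + qq⁻¹ ^ b * qint a := by
  simp only [qint, ← mul_div_assoc, ← add_div, pow_add]
  ring

lemma qbinom_zero_right (n : ℕ) : qbinom n 0 = 1 := by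
  simp [qbinom, qfact, qfact_ne_zero]

lemma qbinom_self (n : ℕ) : qbinom n n = 1 := by
  simp [qbinom, qfact, qfact_ne_zero]

lemma qbinom_of_lt {n k : ℕ} (h : n < k) : qbinom n k = 0 := if_neg (by omega)

lemma qbinom_succ_succ (n k : ℕ) :
    qbinom (n + 1) (k + 1) = qq ^ (k + 1) * qbinom n (k + 1) + qq⁻¹ ^ (n - k) * qbinom n k := by
  rcases lt_trichotomy k n with h | rfl | h
  · obtain ⟨j, rfl⟩ : ∃ j, n = k + 1 + j := ⟨n - (k + 1), by omega⟩
    have hsum := qint_add (k + 1) (j + 1)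
    simp only [qbinom, if_pos (show k + 1 ≤ k + 1 + j + 1 by omega),
      if_pos (show k + 1 ≤ k + 1 + j by omega), if_pos (show k ≤ k + 1 + j by omega),
      show k + 1 + j + 1 - (k + 1) = j + 1 by omega, show k + 1 + j - (k + 1) = j by omega,
      show k + 1 + j - k = j + 1 by omega, qfact]
    have := qint_ne_zero (Nat.succ_ne_zero j)
    have := qint_ne_zero (Nat.succ_ne_zero k)
    have := qfact_ne_zero j
    have := qfact_ne_zero k
    field_simp
    rw [show k + 1 + j + 1 = k + 1 + (j + 1) by omega, hsum]
    ring
  · simp [qbinom_self, qbinom_of_lt]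
  · simp [qbinom_of_lt h, qbinom_of_lt (h.trans k.lt_succ_self),
      qbinom_of_lt (Nat.succ_lt_succ h)]

section NormalOrder

variable {R A : Type*} [CommRing R] [Ring A] [Algebra R A]

def normalOrderCoeff (c : R) : ℕ → ℕ → R
  | 0, 0 => 1
  | 0, _ + 1 => 0
  | n + 1, 0 => c ^ n * normalOrderCoeff c n 0
  | n + 1, k + 1 =>
      c ^ (n - (k + 1)) * normalOrderCoeff c n (k + 1) - c ^ (n - k) * normalOrderCoeff c n k

lemma normalOrderCoeff_of_lt (c : R) {n k : ℕ} (h : n < k) : normalOrderCoeff c n k = 0 := by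
  induction n generalizing k with
  | zero => obtain ⟨k, rfl⟩ := Nat.exists_eq_succ_of_ne_zero h.ne'; rfl
  | succ n ih =>
    obtain ⟨k, rfl⟩ := Nat.exists_eq_succ_of_ne_zero (Nat.ne_zero_of_lt h)
    simp only [normalOrderCoeff, ih (by omega : n < k + 1), ih (by omega : n < k), mul_zero,
      sub_zero]

lemma pow_mul_eq_smul_mul_pow {c : R} {X Y : A} (h : X * Y = c • (Y * X)) (m : ℕ) :
    X ^ m * Y = c ^ m • (Y * X ^ m) := by
  induction m with
  | zero => simp
  | succ m ih =>
    rw [pow_succ', mul_assoc, ih, mul_smul_comm, ← mul_assoc, h, smul_mul_assoc, smul_smul,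
      mul_assoc, ← pow_succ', ← pow_succ]

variable {c : R} {x X : A}

lemma mul_sub_eq_smul_sub_mul
    (h : X * x = algebraMap R A c * (x * X) + (1 - algebraMap R A c) * X ^ 2) :
    X * (X - x) = c • ((X - x) * X) := by
  rw [mul_sub, h, Algebra.smul_def]
  noncomm_ring

lemma monomial_mul_sub (h : X * (X - x) = c • ((X - x) * X)) (k m : ℕ) :
    x ^ k * X ^ m * (X - x) = c ^ m • (x ^ k * X ^ (m + 1) - x ^ (k + 1) * X ^ m) := by
  rw [mul_assoc, pow_mul_eq_smul_mul_pow h, mul_smul_comm, ← mul_assoc, mul_sub, sub_mul,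
    ← pow_succ, mul_assoc (x ^ k) X, ← pow_succ']

theorem sub_pow_eq_sum_normalOrderCoeff (h : X * (X - x) = c • ((X - x) * X)) (n : ℕ) :
    (X - x) ^ n = ∑ k ∈ range (n + 1), normalOrderCoeff c n k • (x ^ k * X ^ (n - k)) := by
  induction n with
  | zero => simp [normalOrderCoeff]
  | succ n ih =>
    -- summation by parts: `normalOrderCoeff c (n + 1) (k + 1) = P (k + 1) - P k`
    set P : ℕ → R := fun k => c ^ (n - k) * normalOrderCoeff c n k
    set m : ℕ → A := fun k => x ^ k * X ^ (n + 1 - k)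
    have hP : P (n + 1) = 0 := by simp [P, normalOrderCoeff_of_lt c (Nat.lt_succ_self n)]
    calc (X - x) ^ (n + 1) = ∑ k ∈ range (n + 1), P k • (m k - m (k + 1)) := by
          rw [pow_succ, ih, sum_mul]
          refine sum_congr rfl fun k hk => ?_
          rw [smul_mul_assoc, monomial_mul_sub h, smul_smul, mul_comm]
          simp only [m, P, show n + 1 - k = n - k + 1 by have := mem_range.1 hk; omega,
            Nat.add_sub_add_right]
      _ = P 0 • m 0 + ∑ k ∈ range (n + 1), (P (k + 1) - P k) • m (k + 1) := by
          simp only [sub_smul, sum_sub_distrib, smul_sub]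
          rw [sum_range_succ' (fun k => P k • m k),
            sum_range_succ (fun k => P (k + 1) • m (k + 1)), hP]
          simp only [zero_smul, add_zero]
          abel
      _ = ∑ k ∈ range (n + 1 + 1),
            normalOrderCoeff c (n + 1) k • (x ^ k * X ^ (n + 1 - k)) := by
          rw [sum_range_succ' _ (n + 1), add_comm]
          rfl

end NormalOrder

theorem normalOrderCoeff_qq_inv_sq (n k : ℕ) :
    normalOrderCoeff (qq⁻¹ ^ 2) n k = (-1) ^ k * qbinom n k * qq⁻¹ ^ ((n - k) * (n - 1)) := by
  induction n generalizing k with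
  | zero =>
    cases k with
    | zero => simp [normalOrderCoeff, qbinom_self]
    | succ k => simp [normalOrderCoeff, qbinom_of_lt]
  | succ n ih =>
    cases k with
    | zero =>
      have hexp : 2 * n + n * (n - 1) = (n + 1) * n := by
        rcases n with _ | n
        · rfl
        · rw [Nat.add_sub_cancel]; ring
      rw [normalOrderCoeff, ih, qbinom_zero_right, qbinom_zero_right, Nat.sub_zero, Nat.sub_zero,
        Nat.add_sub_cancel, ← hexp, pow_add, pow_mul]
      ring
    | succ k =>
      rw [normalOrderCoeff, ih, ih, qbinom_succ_succ, Nat.add_sub_add_right, Nat.add_sub_cancel]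
      rcases lt_or_ge k n with hk | hk
      · obtain ⟨j, rfl⟩ : ∃ j, n = k + 1 + j := ⟨n - (k + 1), by omega⟩
        simp only [show k + 1 + j - (k + 1) = j by omega, show k + 1 + j - k = j + 1 by omega,
          show k + 1 + j - 1 = k + j by omega]
        have hinv : qq ^ (k + 1) * qq⁻¹ ^ (k + 1) = 1 := by
          rw [← mul_pow, mul_inv_cancel₀ qq_ne_zero, one_pow]
        linear_combination
          -(-1) ^ (k + 1) * qbinom (k + 1 + j) (k + 1) * qq⁻¹ ^ (2 * j + j * (k + j)) * hinv
      · rw [qbinom_of_lt (Nat.lt_succ_of_le hk), Nat.sub_eq_zero_of_le hk]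
        ring

/-- (z(X-x))ⁿ = zⁿ ∑ₖ (-1)ᵏ [n k]_q q^{-(n-k)(n-1)} xᵏ X^{n-k} in A[z]. -/
theorem stmt3 {A : Type*} [Ring A] [Algebra (RatFunc ℂ) A] (x X : A)
    (h : X * x = algebraMap (RatFunc ℂ) A (qq⁻¹ ^ 2) * (x * X)
        + (1 - algebraMap (RatFunc ℂ) A (qq⁻¹ ^ 2)) * X ^ 2) (n : ℕ) :
    (Polynomial.X * (Polynomial.C X - Polynomial.C x)) ^ n
      = Polynomial.X ^ n * Polynomial.C (∑ k ∈ Finset.range (n + 1),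
          algebraMap (RatFunc ℂ) A ((-1) ^ k * qbinom n k * qq⁻¹ ^ ((n - k) * (n - 1)))
            * (x ^ k * X ^ (n - k))) := by
  rw [(Polynomial.commute_X _).mul_pow, ← map_sub, ← map_pow,
    sub_pow_eq_sum_normalOrderCoeff (mul_sub_eq_smul_sub_mul h)]
  simp only [normalOrderCoeff_qq_inv_sq, Algebra.smul_def]
end

section
/- For integers n ≥ 1 and sequences 0 ≤ m_n ≤ ⋯ ≤ m_1 of nonnegative integers, define c_{m_1} (q) = 1 (and the empty coefficient equal to 1) and inductively c_{m_k,…,m_1}(q) = q^{k(k-1)m_k} ∑_{j=0}^{k-1} (-1)^{k+j+1} [k choose j]_q q^{(k-j)(k-1) - j(j-1)m_k} c_{m_j,…,m_1}(q) δ_{m_{j+1}, m_k}. Then for any integer a with 0 ≤ a ≤ m_k, c_{m_k−a,…,m_1−a}(q) = q^{−k(k−1)a} c_{m_k,…,m_1}(q). -/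
open Finset

/-- The coefficients `c_{m_k,…,m_1}(q)` defined by the paper's recursion
(`m i` is the entry `m_i`; the empty coefficient is `1`). -/
noncomputable def cC (m : ℕ → ℕ) : ℕ → RatFunc ℂ
  | 0 => 1
  | k + 1 =>
      qq ^ ((k + 1) * k * m (k + 1)) *
        ∑ j ∈ (Finset.range (k + 1)).attach,
          (-1 : RatFunc ℂ) ^ (k + 1 + j.1 + 1) * qbinom (k + 1) j.1 *
            qq ^ ((k + 1 - j.1) * k) * qq⁻¹ ^ (j.1 * (j.1 - 1) * m (k + 1)) *
            (if m (j.1 + 1) = m (k + 1) then cC m j.1 else 0)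
  termination_by k => k
  decreasing_by exact Finset.mem_range.mp j.2

/- Only `m_1, …, m_k` enter `c_{m_k,…,m_1}`, and the Kronecker deltas compare entries among
them, so subtracting `a` from all of them leaves every delta unchanged. In the `j`-th summand
the factor `q^{-j(j-1)(m_k-a)}` then absorbs the factor `q^{-j(j-1)a}` produced by induction,
so the whole sum is shift-invariant and only the prefactor `q^{k(k-1)m_k}` changes. -/
theorem cC_sub_const (m : ℕ → ℕ) (a : ℕ) :
    ∀ k, (∀ i, 1 ≤ i → i ≤ k → a ≤ m i) →
      cC (fun i => m i - a) k = qq⁻¹ ^ (k * (k - 1) * a) * cC m k := by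
  intro k
  induction k using Nat.strong_induction_on with
  | _ k ih =>
    match k with
    | 0 => intro _; simp [cC]
    | k + 1 =>
      intro ha
      have ha_top : a ≤ m (k + 1) := ha _ le_add_self le_rfl
      have hsum : ∀ j ∈ (range (k + 1)).attach,
          (-1 : RatFunc ℂ) ^ (k + 1 + j.1 + 1) * qbinom (k + 1) j.1 *
              qq ^ ((k + 1 - j.1) * k) * qq⁻¹ ^ (j.1 * (j.1 - 1) * (m (k + 1) - a)) *
              (if m (j.1 + 1) - a = m (k + 1) - a then cC (fun i => m i - a) j.1 else 0)
            = (-1 : RatFunc ℂ) ^ (k + 1 + j.1 + 1) * qbinom (k + 1) j.1 *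
              qq ^ ((k + 1 - j.1) * k) * qq⁻¹ ^ (j.1 * (j.1 - 1) * m (k + 1)) *
              (if m (j.1 + 1) = m (k + 1) then cC m j.1 else 0) := by
        rintro ⟨j, hj⟩ -
        have hjk : j < k + 1 := mem_range.mp hj
        have hexp : qq⁻¹ ^ (j * (j - 1) * (m (k + 1) - a)) * qq⁻¹ ^ (j * (j - 1) * a)
            = qq⁻¹ ^ (j * (j - 1) * m (k + 1)) := by
          rw [← pow_add, ← Nat.mul_add, Nat.sub_add_cancel ha_top]
        simp only [tsub_left_inj (ha (j + 1) le_add_self (by omega)) ha_top]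
        split_ifs
        · rw [ih j hjk fun i hi _ => ha i hi (by omega), ← hexp]
          ring
        · rw [mul_zero, mul_zero]
      rw [cC, cC, sum_congr rfl hsum, Nat.add_sub_cancel, Nat.mul_sub _ _ _,
        pow_sub₀ _ RatFunc.X_ne_zero (Nat.mul_le_mul_left _ ha_top), inv_pow, qq]
      ring

theorem stmt5_general (m : ℕ → ℕ) (k : ℕ)
    (hmono : ∀ i j : ℕ, 1 ≤ i → i ≤ j → m j ≤ m i)
    (a : ℕ) (ha : a ≤ m k) :
    cC (fun i => m i - a) k = qq⁻¹ ^ (k * (k - 1) * a) * cC m k :=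
  cC_sub_const m a k fun i hi hik => ha.trans (hmono i k hi hik)

/-- shifting all entries down by `a` rescales `c` by `q^{-k(k-1)a}`. -/
theorem stmt5 (m : ℕ → ℕ) (k : ℕ) (hk : 1 ≤ k)
    (hmono : ∀ i j : ℕ, 1 ≤ i → i ≤ j → m j ≤ m i)
    (a : ℕ) (ha : a ≤ m k) :
    cC (fun i => m i - a) k = qq⁻¹ ^ (k * (k - 1) * a) * cC m k :=
  stmt5_general m k hmono a ha
end

section
/- Let A be a ℂ(q)-algebra with elements h, X, x such that [h, X] = λ(X − x) for some central invertible λ, and X·x = q^{-2}xX + (1−q^{-2})X². Then for every n ≥ 1, [h, X^n] = λ·(∑_{k=0}^{n-1} q^{-2k})·(X^n − x·X^{n-1}). -/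
open Finset

/-!
Put `y = X - x`. The relation `X x = q⁻² x X + (1 - q⁻²) X²` says exactly that
`X y = q⁻² y X`, and `[h, X] = λ y`, so `[h, X]` is `q⁻²`-commuted by `X`. Expanding
`[h, Xⁿ] = ∑ₖ Xᵏ [h, X] Xⁿ⁻¹⁻ᵏ` and moving each `Xᵏ` to the right past `[h, X]` at the
cost of `q⁻²ᵏ` gives `[h, Xⁿ] = (∑ₖ q⁻²ᵏ) λ y Xⁿ⁻¹`, and `y Xⁿ⁻¹ = Xⁿ - x Xⁿ⁻¹`.
-/

theorem pow_mul_eq_pow_mul_mul_pow {M : Type*} [Monoid M] {a y Q : M} (hQ : Commute Q a)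
    (h : a * y = Q * (y * a)) (n : ℕ) : a ^ n * y = Q ^ n * (y * a ^ n) := by
  induction n with
  | zero => simp
  | succ n ih =>
    calc a ^ (n + 1) * y = a ^ n * Q * (y * a) := by rw [pow_succ, mul_assoc, h, mul_assoc]
      _ = Q * (a ^ n * y) * a := by rw [← (hQ.pow_right n).eq]; simp only [mul_assoc]
      _ = Q ^ (n + 1) * (y * a ^ (n + 1)) := by
        rw [ih, pow_succ', pow_succ]; simp only [mul_assoc]

theorem mul_pow_sub_pow_mul_eq_geom_sum_mul {R : Type*} [Ring R] {h a Q : R}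
    (hQ : Commute Q a) (hd : a * (h * a - a * h) = Q * ((h * a - a * h) * a)) (n : ℕ) :
    h * a ^ (n + 1) - a ^ (n + 1) * h
      = (∑ k ∈ range (n + 1), Q ^ k) * ((h * a - a * h) * a ^ n) := by
  induction n with
  | zero => simp
  | succ n ih =>
    have hexpand : h * a ^ (n + 2) - a ^ (n + 2) * h
        = (h * a ^ (n + 1) - a ^ (n + 1) * h) * a + a ^ (n + 1) * (h * a - a * h) := by
      rw [pow_succ _ (n + 1)]; noncomm_ring
    rw [hexpand, ih, pow_mul_eq_pow_mul_mul_pow hQ hd, sum_range_succ _ (n + 1)]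
    simp only [mul_assoc, ← pow_succ, add_mul]

theorem mul_sub_eq_mul_sub_mul_of_mul_eq {R : Type*} [Ring R] {X x Q : R}
    (h : X * x = Q * (x * X) + (1 - Q) * X ^ 2) : X * (X - x) = Q * ((X - x) * X) := by
  rw [mul_sub, h]; noncomm_ring

theorem stmt12_general {A : Type*} [Ring A] [Algebra (RatFunc ℂ) A] (h X x l : A)
    (hcentral : ∀ a : A, l * a = a * l)
    (hcomm : h * X - X * h = l * (X - x))
    (hXx : X * x = algebraMap (RatFunc ℂ) A (qq⁻¹ ^ 2) * (x * X)
        + (1 - algebraMap (RatFunc ℂ) A (qq⁻¹ ^ 2)) * X ^ 2) :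
    ∀ n : ℕ, 1 ≤ n →
      h * X ^ n - X ^ n * h
        = l * ((∑ k ∈ Finset.range n, algebraMap (RatFunc ℂ) A (qq⁻¹ ^ (2 * k)))
            * (X ^ n - x * X ^ (n - 1))) := by
  intro n hn
  obtain ⟨m, rfl⟩ := Nat.exists_eq_add_of_le' hn
  set Q := algebraMap (RatFunc ℂ) A (qq⁻¹ ^ 2)
  have hQ (a : A) : Commute Q a := Algebra.commutes _ a
  have hsum : ∑ k ∈ range (m + 1), algebraMap (RatFunc ℂ) A (qq⁻¹ ^ (2 * k))
      = ∑ k ∈ range (m + 1), Q ^ k := by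
    simp only [Q, pow_mul, map_pow]
  have hd : X * (h * X - X * h) = Q * ((h * X - X * h) * X) := by
    rw [hcomm, ← mul_assoc, ← hcentral, mul_assoc, mul_sub_eq_mul_sub_mul_of_mul_eq hXx,
      ← mul_assoc, ← (hQ l).eq, mul_assoc, mul_assoc]
  rw [mul_pow_sub_pow_mul_eq_geom_sum_mul (hQ X) hd, hcomm, hsum, Nat.add_sub_cancel,
    pow_succ', ← mul_sub_right_distrib, ← mul_assoc l, hcentral (∑ k ∈ range (m + 1), Q ^ k)]
  simp only [mul_assoc]

/-- if `[h,X] = λ(X−x)` with `λ` central invertible and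
`X·x = q⁻²xX + (1−q⁻²)X²`, then `[h,Xⁿ] = λ(∑_{k<n} q^{−2k})(Xⁿ − xXⁿ⁻¹)`. -/
theorem stmt12 {A : Type*} [Ring A] [Algebra (RatFunc ℂ) A] (h X x l : A)
    (hcentral : ∀ a : A, l * a = a * l) (hunit : IsUnit l)
    (hcomm : h * X - X * h = l * (X - x))
    (hXx : X * x = algebraMap (RatFunc ℂ) A (qq⁻¹ ^ 2) * (x * X)
        + (1 - algebraMap (RatFunc ℂ) A (qq⁻¹ ^ 2)) * X ^ 2) :
    ∀ n : ℕ, 1 ≤ n →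
      h * X ^ n - X ^ n * h
        = l * ((∑ k ∈ Finset.range n, algebraMap (RatFunc ℂ) A (qq⁻¹ ^ (2 * k)))
            * (X ^ n - x * X ^ (n - 1))) :=
  stmt12_general h X x l hcentral hcomm hXx
end
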